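/- For every integer N ≥ 1 there exist polynomials G_{N,0}, G_{N,1}, G_{N,2} ∈ ℤ[X₀,X₁,X₂,X₃], each homogeneous of degree 4^N in the variables X₀, X₁, X₂ and of total degree at most 2·4^N, with the following property. For every λ ∈ ℂ with λ ≠ 0 and λ ≠ 1 and every affine point P = (x, y) on the Legendre elliptic curve W_λ : y² = x³ − (1+λ)x² + λx, setting gᵢ = G_{N,i}(x, y, 1, λ), the values g₀, g₁, g₂ are not all zero, and the point 2^N•P in the group of points of W_λ equals the affine point (g₀/g₂, g₁/g₂) if g₂ ≠ 0 and the point at infinity (zero of the group) if g₂ = 0. -/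

import Mathlib

/-!
The projective doubling map `dblXYZ` on a Weierstrass curve is a triple of forms of degree 4
in `X, Y, Z` with coefficients polynomial in the `aᵢ`; on a nonsingular representative it
represents the double of the point, and its `Z`-coordinate vanishes exactly when that double is
the point at infinity. On the universal Legendre curve over `ℤ[X₀, X₁, X₂, X₃]` (with `λ = X₃`)
take `G_N` to be the `N`-th iterate of `dblXYZ` at `(X₀, X₁, X₂)`; since `dblXYZ` commutes with
ring homomorphisms, specializing at `(x, y, 1, λ)` gives the `N`-th iterate on `W_λ` at `P`.
Each step substitutes `G_N` into the single doubling triple, which is homogeneous of degree 4 in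
`X₀, X₁, X₂` and of degree at most 3 in `X₃`; hence `G_N` is homogeneous of degree `4 ^ N` and
its total degree `d_N` satisfies `d_{N+1} ≤ 4 d_N + 3`, i.e. `d_N < 2 · 4 ^ N`.
-/

open MvPolynomial WeierstrassCurve

/-- The Legendre elliptic curve `y² = x(x−1)(x−λ) = x³ − (1+λ)x² + λx` in affine
Weierstrass form. -/
def LegendreCurve (lam : ℂ) : WeierstrassCurve.Affine ℂ :=
  { a₁ := 0, a₂ := -(1 + lam), a₃ := 0, a₄ := lam, a₆ := 0 }

namespace MvPolynomial

variable {σ τ R S M : Type*} [CommSemiring R] [CommSemiring S] [Algebra R S] [AddCommMonoid M]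

theorem IsWeightedHomogeneous.aeval {v : σ → M} {w : τ → M} {φ : MvPolynomial σ R} {m : M}
    (hφ : φ.IsWeightedHomogeneous v m) {g : σ → MvPolynomial τ S}
    (hg : ∀ i, (g i).IsWeightedHomogeneous w (v i)) :
    (aeval g φ).IsWeightedHomogeneous w m := by
  rw [aeval_def, eval₂_eq, ← Finset.sum_attach]
  refine IsWeightedHomogeneous.sum _ _ _ fun ⟨d, hd⟩ _ => ?_
  rw [← hφ (mem_support_iff.mp hd), ← zero_add (Finsupp.weight v d), Finsupp.weight_apply]
  refine (isWeightedHomogeneous_C w _).mul (IsWeightedHomogeneous.prod _ _ _ fun i _ => ?_)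
  exact (hg i).pow (d i)

theorem IsWeightedHomogeneous.nsmul_weight {w : σ → M} {φ : MvPolynomial σ R} {m : M}
    (hφ : φ.IsWeightedHomogeneous w m) (k : ℕ) : φ.IsWeightedHomogeneous (k • w) (k • m) := by
  intro d hd
  simp only [← hφ hd, Finsupp.weight_apply, Finsupp.smul_sum, Pi.smul_apply, smul_comm k]

theorem totalDegree_aeval_le (g : σ → MvPolynomial τ S) (p : MvPolynomial σ R) :
    (aeval g p).totalDegree ≤ p.weightedTotalDegree fun i => (g i).totalDegree := by
  rw [aeval_def, eval₂_eq]
  refine totalDegree_finsetSum_le fun d hd => (totalDegree_mul _ _).trans ?_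
  rw [algebraMap_apply, totalDegree_C, zero_add]
  refine (totalDegree_finsetProd _ _).trans ?_
  exact (Finset.sum_le_sum fun i _ => totalDegree_pow _ _).trans (le_weightedTotalDegree _ hd)

end MvPolynomial

namespace WeierstrassCurve.Projective

variable {R S F : Type*} [CommRing R] [CommRing S] [Field F]

lemma map_iterate_dblXYZ {W : Projective R} (f : R →+* S) (P : Fin 3 → R) (n : ℕ) :
    (W.map f).dblXYZ^[n] (f ∘ P) = f ∘ W.dblXYZ^[n] P :=
  (Function.Semiconj.iterate_right (fun Q => (map_dblXYZ f Q).symm) n P).symm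

variable {W : Projective F} {P : Fin 3 → F}

lemma nonsingular_iterate_dblXYZ (hP : W.Nonsingular P) (n : ℕ) :
    W.Nonsingular (W.dblXYZ^[n] P) := by
  induction n with
  | zero => exact hP
  | succ n ih =>
    rw [Function.iterate_succ_apply', ← add_self]
    exact nonsingular_add ih ih

lemma toAffine_iterate_dblXYZ [DecidableEq F] (hP : W.Nonsingular P) (n : ℕ) :
    Point.toAffine W (W.dblXYZ^[n] P) = 2 ^ n • Point.toAffine W P := by
  induction n with
  | zero => simp
  | succ n ih =>
    have hPn := nonsingular_iterate_dblXYZ hP n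
    rw [Function.iterate_succ_apply', ← add_self, Point.toAffine_add hPn hPn, ih, ← add_nsmul,
      pow_succ, mul_two]

lemma not_forall_eq_zero_of_nonsingular (hP : W.Nonsingular P) :
    ¬(P 0 = 0 ∧ P 1 = 0 ∧ P 2 = 0) :=
  fun ⟨_, hy, hz⟩ => Y_ne_zero_of_Z_eq_zero hP hz hy

end WeierstrassCurve.Projective

namespace LegendreCurve

noncomputable def universal : WeierstrassCurve (MvPolynomial (Fin 4) ℤ) :=
  { a₁ := 0, a₂ := -(1 + X 3), a₃ := 0, a₄ := X 3, a₆ := 0 }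

lemma universal_map {S : Type*} [CommRing S] (f : MvPolynomial (Fin 4) ℤ →+* S) :
    universal.map f = { a₁ := 0, a₂ := -(1 + f (X 3)), a₃ := 0, a₄ := f (X 3), a₆ := 0 } := by
  ext <;> simp [universal]

noncomputable def dblPoly : Fin 3 → MvPolynomial (Fin 4) ℤ :=
  universal.toProjective.dblXYZ ![X 0, X 1, X 2]

noncomputable def iterDblPoly (N : ℕ) : Fin 3 → MvPolynomial (Fin 4) ℤ :=
  universal.toProjective.dblXYZ^[N] ![X 0, X 1, X 2]

lemma dblXYZ_universal (P : Fin 3 → MvPolynomial (Fin 4) ℤ) :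
    universal.toProjective.dblXYZ P = fun i => aeval ![P 0, P 1, P 2, X 3] (dblPoly i) := by
  set f : MvPolynomial (Fin 4) ℤ →+* MvPolynomial (Fin 4) ℤ :=
    (aeval ![P 0, P 1, P 2, X 3]).toRingHom
  have hW : universal.toProjective.map f = universal := by
    rw [Projective.map, universal_map]
    simp [f, universal]
  have hP : f ∘ ![X 0, X 1, X 2] = P := by
    ext i
    fin_cases i <;> simp [f]
  calc universal.toProjective.dblXYZ P
      = (universal.toProjective.map f).dblXYZ (f ∘ ![X 0, X 1, X 2]) := by rw [hW, hP]
    _ = f ∘ dblPoly := Projective.map_dblXYZ f _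

lemma iterDblPoly_succ (N : ℕ) :
    iterDblPoly (N + 1) = fun i =>
      aeval ![iterDblPoly N 0, iterDblPoly N 1, iterDblPoly N 2, X 3] (dblPoly i) := by
  rw [iterDblPoly, Function.iterate_succ_apply', dblXYZ_universal, iterDblPoly]

lemma aeval_iterDblPoly (lam x y : ℂ) (N : ℕ) :
    (fun i => aeval ![x, y, 1, lam] (iterDblPoly N i)) =
      (LegendreCurve lam).toProjective.dblXYZ^[N] ![x, y, 1] := by
  set f : MvPolynomial (Fin 4) ℤ →+* ℂ := (aeval ![x, y, 1, lam]).toRingHom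
  have hW : universal.toProjective.map f = LegendreCurve lam := by
    rw [Projective.map, universal_map]
    simp [f, LegendreCurve]
  have hP : f ∘ ![X 0, X 1, X 2] = ![x, y, 1] := by
    ext i
    fin_cases i <;> simp [f]
  rw [← hW, ← hP, Projective.map_iterate_dblXYZ]
  rfl

-- Irreducible, so that matching a lemma about `mono` against a long sum of them fails fast.
@[irreducible] noncomputable def mono (k : ℤ) (a b c d : ℕ) : MvPolynomial (Fin 4) ℤ :=
  monomial (Finsupp.single 0 a + Finsupp.single 1 b + Finsupp.single 2 c + Finsupp.single 3 d) k

def xyzWeight : Fin 4 → ℕ := ![1, 1, 1, 0]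

lemma weight_xyzWeight (m : Fin 4 →₀ ℕ) : Finsupp.weight xyzWeight m = m 0 + m 1 + m 2 := by
  simp [Finsupp.weight_apply, Finsupp.sum_fintype, Fin.sum_univ_four, xyzWeight]

lemma isWeightedHomogeneous_mono (k : ℤ) (a b c d : ℕ) :
    (mono k a b c d).IsWeightedHomogeneous xyzWeight (a + b + c) := by
  rw [mono]
  apply isWeightedHomogeneous_monomial
  simp [weight_xyzWeight]

lemma totalDegree_mono_le {n : ℕ} (k : ℤ) {a b c d : ℕ} (h : a + b + c + d ≤ n) :
    (mono k a b c d).totalDegree ≤ n := by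
  rw [mono]
  refine (totalDegree_monomial_le _ _).trans ?_
  change Finsupp.degree _ ≤ n
  simpa using h

lemma dblPoly_eq : dblPoly = ![
    mono (-6) 3 1 0 0 + mono (-6) 3 1 0 1 + mono 8 2 1 1 0 + mono 10 2 1 1 1 + mono 8 2 1 1 2 +
      mono 2 1 3 0 0 + mono (-8) 1 1 2 1 + mono (-8) 1 1 2 2 + mono 8 0 3 1 0 + mono 8 0 3 1 1 +
      mono 2 0 1 3 2,
    mono (-9) 4 0 0 0 + mono (-18) 4 0 0 1 + mono (-9) 4 0 0 2 + mono 8 3 0 1 0 +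
      mono 33 3 0 1 1 + mono 33 3 0 1 2 + mono 8 3 0 1 3 + mono (-12) 2 0 2 1 +
      mono (-33) 2 0 2 2 + mono (-12) 2 0 2 3 + mono 8 1 2 1 0 + mono 19 1 2 1 1 +
      mono 8 1 2 1 2 + mono 6 1 0 3 2 + mono 6 1 0 3 3 + mono 1 0 4 0 0 + mono (-4) 0 2 2 1 +
      mono (-4) 0 2 2 2 + mono (-1) 0 0 4 3,
    mono 8 0 3 1 0] := by
  have mono_eq (k : ℤ) (a b c d : ℕ) :
      mono k a b c d = C k * X 0 ^ a * X 1 ^ b * X 2 ^ c * X 3 ^ d := by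
    simp only [mono, X_pow_eq_monomial, C_mul_monomial, monomial_mul, mul_one]
  ext1 i
  fin_cases i <;>
  simp [dblPoly, Projective.dblXYZ, Projective.dblX, Projective.dblY, Projective.negDblY,
      Projective.dblZ, Projective.negY, universal, mono_eq] <;> ring

lemma isWeightedHomogeneous_dblPoly (i : Fin 3) :
    (dblPoly i).IsWeightedHomogeneous xyzWeight 4 := by
  rw [dblPoly_eq]
  fin_cases i <;> simp only [Fin.zero_eta, Fin.mk_one, Fin.reduceFinMk, Matrix.cons_val] <;>
    repeat' first
      | exact isWeightedHomogeneous_mono ..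
      | refine .add ?_ ?_

lemma totalDegree_dblPoly_le (i : Fin 3) : (dblPoly i).totalDegree ≤ 7 := by
  rw [dblPoly_eq]
  fin_cases i <;> simp only [Fin.zero_eta, Fin.mk_one, Fin.reduceFinMk, Matrix.cons_val] <;>
    repeat' first
      | exact totalDegree_mono_le _ (by norm_num)
      | refine (totalDegree_add _ _).trans (max_le ?_ ?_)

lemma isWeightedHomogeneous_iterDblPoly (N : ℕ) (i : Fin 3) :
    (iterDblPoly N i).IsWeightedHomogeneous xyzWeight (4 ^ N) := by
  induction N generalizing i with
  | zero => fin_cases i <;> exact isWeightedHomogeneous_X ℤ xyzWeight _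
  | succ N ih =>
    rw [iterDblPoly_succ, pow_succ, ← smul_eq_mul]
    refine (isWeightedHomogeneous_dblPoly i).nsmul_weight _ |>.aeval fun j => ?_
    fin_cases j
    · simpa [xyzWeight] using ih 0
    · simpa [xyzWeight] using ih 1
    · simpa [xyzWeight] using ih 2
    · simpa [xyzWeight] using isWeightedHomogeneous_X ℤ xyzWeight 3

lemma totalDegree_iterDblPoly_lt (N : ℕ) (i : Fin 3) :
    (iterDblPoly N i).totalDegree < 2 * 4 ^ N := by
  induction N generalizing i with
  | zero => fin_cases i <;> simp [iterDblPoly, totalDegree_X]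
  | succ N ih =>
    rw [iterDblPoly_succ]
    refine (totalDegree_aeval_le _ _).trans_lt ?_
    refine (Finset.sup_lt_iff (by positivity)).mpr fun d hd => ?_
    have hxyz : d 0 + d 1 + d 2 = 4 := by
      rw [← weight_xyzWeight]
      exact isWeightedHomogeneous_dblPoly i (mem_support_iff.mp hd)
    have hdeg : d 0 + d 1 + d 2 + d 3 ≤ 7 := by
      refine le_trans (le_of_eq ?_) ((le_totalDegree hd).trans (totalDegree_dblPoly_le i))
      simp [Finsupp.sum_fintype, Fin.sum_univ_four]
    have h0 := ih 0
    have h1 := ih 1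
    have h2 := ih 2
    rw [Finsupp.weight_apply, Finsupp.sum_fintype _ _ (by simp), Fin.sum_univ_four]
    simp only [smul_eq_mul, Matrix.cons_val, totalDegree_X, pow_succ]
    nlinarith

lemma Δ_eq (lam : ℂ) : (LegendreCurve lam).Δ = 16 * lam ^ 2 * (lam - 1) ^ 2 := by
  simp only [LegendreCurve, WeierstrassCurve.Δ, b₂, b₄, b₆, b₈]
  ring

lemma nonsingular {lam x y : ℂ} (h0 : lam ≠ 0) (h1 : lam ≠ 1)
    (h : (LegendreCurve lam).Equation x y) : (LegendreCurve lam).Nonsingular x y :=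
  (Affine.equation_iff_nonsingular_of_Δ_ne_zero (by simp [Δ_eq, h0, sub_eq_zero, h1])).mp h

end LegendreCurve

theorem stmt_5_general (N : ℕ) :
    ∃ G : Fin 3 → MvPolynomial (Fin 4) ℤ,
      (∀ i, ∀ m ∈ (G i).support, m 0 + m 1 + m 2 = 4 ^ N) ∧
      (∀ i, (G i).totalDegree ≤ 2 * 4 ^ N) ∧
      ∀ lam x y : ℂ, lam ≠ 0 → lam ≠ 1 → (LegendreCurve lam).Equation x y →
        ¬(aeval ![x, y, 1, lam] (G 0) = 0 ∧ aeval ![x, y, 1, lam] (G 1) = 0 ∧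
            aeval ![x, y, 1, lam] (G 2) = 0) ∧
        ∃ hns : (LegendreCurve lam).Nonsingular x y,
          (aeval ![x, y, 1, lam] (G 2) ≠ 0 →
            ∃ hns' : (LegendreCurve lam).Nonsingular
                (aeval ![x, y, 1, lam] (G 0) / aeval ![x, y, 1, lam] (G 2))
                (aeval ![x, y, 1, lam] (G 1) / aeval ![x, y, 1, lam] (G 2)),
              2 ^ N • WeierstrassCurve.Affine.Point.some _ _ hns =
                WeierstrassCurve.Affine.Point.some _ _ hns') ∧
          (aeval ![x, y, 1, lam] (G 2) = 0 →
            2 ^ N • WeierstrassCurve.Affine.Point.some _ _ hns = 0) := by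
  refine ⟨LegendreCurve.iterDblPoly N, fun i m hm => ?_,
    fun i => (LegendreCurve.totalDegree_iterDblPoly_lt N i).le, fun lam x y h0 h1 hxy => ?_⟩
  · rw [← LegendreCurve.weight_xyzWeight]
    exact LegendreCurve.isWeightedHomogeneous_iterDblPoly N i (mem_support_iff.mp hm)
  have hns := LegendreCurve.nonsingular h0 h1 hxy
  have hP : (LegendreCurve lam).toProjective.Nonsingular ![x, y, 1] :=
    (Projective.nonsingular_some x y).mpr hns
  have hg := LegendreCurve.aeval_iterDblPoly lam x y N
  have hgns := hg ▸ Projective.nonsingular_iterate_dblXYZ hP N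
  have h2N := hg ▸ Projective.toAffine_iterate_dblXYZ hP N
  rw [Projective.Point.toAffine_some hP] at h2N
  refine ⟨Projective.not_forall_eq_zero_of_nonsingular hgns, hns, fun hz => ?_, fun hz => ?_⟩
  · rw [Projective.Point.toAffine_of_Z_ne_zero hgns hz] at h2N
    exact ⟨_, h2N.symm⟩
  · rw [← h2N]
    exact Projective.Point.toAffine_of_Z_eq_zero hz

/-- For every `N ≥ 1` there exist polynomials
`G_{N,0}, G_{N,1}, G_{N,2} ∈ ℤ[X₀,X₁,X₂,X₃]`, homogeneous of degree `4^N` in `X₀,X₁,X₂` and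
of total degree at most `2·4^N`, such that for every `λ ∈ ℂ \ {0,1}` and every affine point
`(x, y)` of the Legendre curve, setting `gᵢ = G_{N,i}(x, y, 1, λ)`, the `gᵢ` are not all
zero and `2^N•P = (g₀/g₂, g₁/g₂)` if `g₂ ≠ 0`, while `2^N•P = 0` if `g₂ = 0`. -/
theorem stmt_5 (N : ℕ) (hN : 1 ≤ N) :
    ∃ G : Fin 3 → MvPolynomial (Fin 4) ℤ,
      (∀ i, ∀ m ∈ (G i).support, m 0 + m 1 + m 2 = 4 ^ N) ∧
      (∀ i, (G i).totalDegree ≤ 2 * 4 ^ N) ∧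
      ∀ lam x y : ℂ, lam ≠ 0 → lam ≠ 1 → (LegendreCurve lam).Equation x y →
        ¬(aeval ![x, y, 1, lam] (G 0) = 0 ∧ aeval ![x, y, 1, lam] (G 1) = 0 ∧
            aeval ![x, y, 1, lam] (G 2) = 0) ∧
        ∃ hns : (LegendreCurve lam).Nonsingular x y,
          (aeval ![x, y, 1, lam] (G 2) ≠ 0 →
            ∃ hns' : (LegendreCurve lam).Nonsingular
                (aeval ![x, y, 1, lam] (G 0) / aeval ![x, y, 1, lam] (G 2))
                (aeval ![x, y, 1, lam] (G 1) / aeval ![x, y, 1, lam] (G 2)),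
              2 ^ N • WeierstrassCurve.Affine.Point.some _ _ hns =
                WeierstrassCurve.Affine.Point.some _ _ hns') ∧
          (aeval ![x, y, 1, lam] (G 2) = 0 →
            2 ^ N • WeierstrassCurve.Affine.Point.some _ _ hns = 0) :=
  stmt_5_general N
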